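/- arXiv:2301.03638 — 2 statements merged into one kernel-verified Lean document; each statement's English description precedes it below -/
import Mathlib

section
/- Let γ > 1, j an integer, and d ∈ [1, γ). If U is uniformly distributed on [0,1) and b = γ^U, then E[2bγ^j·(γ/(γ-1))·1_{U ≥ log_γ d} + 2bγ^{j+1}·(γ/(γ-1))·1_{U < log_γ d}] = 2dγ^j·(γ/ln γ). -/
/-!
The integrand is `γ ^ u` times a step function jumping at `c = log_γ d ∈ [0, 1)`. Splitting the
integral at `c` and using `∫ γ ^ u = γ ^ u / log γ` gives
`γ ^ (j+1) (d - 1) + γ ^ j (γ - d) = γ ^ j d (γ - 1)` up to the common factor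
`2 γ / ((γ - 1) log γ)`.
-/

open MeasureTheory Real

theorem integral_const_rpow {γ : ℝ} (hγ₀ : 0 < γ) (hγ₁ : γ ≠ 1) (a b : ℝ) :
    ∫ u in a..b, γ ^ u = (γ ^ b - γ ^ a) / log γ := by
  have hlog : log γ ≠ 0 := log_ne_zero_of_pos_of_ne_one hγ₀ hγ₁
  simp only [rpow_def_of_pos hγ₀]
  rw [intervalIntegral.integral_comp_mul_left (fun x => exp x) hlog, integral_exp, smul_eq_mul]
  field_simp

theorem intervalIntegral.integral_ite_le {E : Type*} [NormedAddCommGroup E] [NormedSpace ℝ E]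
    {f g : ℝ → E} {a b c : ℝ} (hac : a ≤ c) (hcb : c ≤ b)
    (hg : IntervalIntegrable g volume a c) (hf : IntervalIntegrable f volume c b) :
    ∫ u in a..b, (if c ≤ u then f u else g u) = (∫ u in a..c, g u) + ∫ u in c..b, f u := by
  have hleft : Set.EqOn (fun u => if c ≤ u then f u else g u) g (Set.uIoo a c) := by
    intro u hu
    rw [Set.uIoo_of_le hac] at hu
    exact if_neg hu.2.not_ge
  have hright : Set.EqOn (fun u => if c ≤ u then f u else g u) f (Set.uIoo c b) := by
    intro u hu
    rw [Set.uIoo_of_le hcb] at hu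
    exact if_pos hu.1.le
  rw [← integral_add_adjacent_intervals (hg.congr_uIoo hleft.symm) (hf.congr_uIoo hright.symm),
    integral_congr_uIoo hleft, integral_congr_uIoo hright]

open Classical in
theorem stmt_1 (γ d : ℝ) (j : ℤ) (hγ : 1 < γ) (hd : 1 ≤ d) (hd' : d < γ) :
    ∫ u in (0:ℝ)..1,
        (if Real.log d / Real.log γ ≤ u
          then 2 * γ ^ u * γ ^ j * (γ / (γ - 1))
          else 2 * γ ^ u * γ ^ (j + 1) * (γ / (γ - 1)))
      = 2 * d * γ ^ j * (γ / Real.log γ) := by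
  have hγ₀ : 0 < γ := one_pos.trans hγ
  have hd₀ : 0 < d := one_pos.trans_le hd
  have hc₀ : 0 ≤ logb γ d := logb_nonneg hγ hd
  have hc₁ : logb γ d ≤ 1 := by
    rw [logb_le_iff_le_rpow hγ hd₀, rpow_one]; exact hd'.le
  have hγ₁ : γ - 1 ≠ 0 := sub_ne_zero.mpr hγ.ne'
  have hcont : Continuous fun u : ℝ => γ ^ u := continuous_const_rpow hγ₀.ne'
  rw [show log d / log γ = logb γ d from rfl,
    intervalIntegral.integral_ite_le hc₀ hc₁ (Continuous.intervalIntegrable (by fun_prop) _ _)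
      (Continuous.intervalIntegrable (by fun_prop) _ _)]
  simp only [intervalIntegral.integral_mul_const, intervalIntegral.integral_const_mul,
    integral_const_rpow hγ₀ hγ.ne', rpow_logb hγ₀ hγ.ne' hd₀, rpow_zero, rpow_one,
    zpow_add_one₀ hγ₀.ne']
  field_simp
  ring
end

section
/- Let G = (V,E) be a connected graph with root r and nonnegative integer vertex weights w_v, total weight W. For each q ∈ [0,W], let λ*(q) be the minimum total edge length of a subtree of G containing r whose vertices have total weight at least q. Then λ* : [0,W] → ℝ≥0 is a nondecreasing piecewise-constant function, and for any expanding search pattern σ, the weighted total latency L(σ) = ∑_v w_v L_v(σ) satisfies L(σ) ≥ ∫_0^W λ*(q) dq. -/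
open Classical

noncomputable section

/-- Vertices explored after the first `i` edges of the pattern `σ`, starting at root `r`. -/
def explored {V : Type*} (r : V) (σ : List (Sym2 V)) (i : ℕ) : Set V :=
  insert r {v | ∃ e ∈ σ.take i, v ∈ e}

/-- An expanding search pattern from root `r`: a sequence of edges of `G`, each connecting
an already explored vertex to an unexplored one. -/
def IsExpandingSearch {V : Type*} (G : SimpleGraph V) (r : V) (σ : List (Sym2 V)) : Prop :=
  ∀ i : ℕ, ∀ h : i < σ.length,
    σ.get ⟨i, h⟩ ∈ G.edgeSet ∧
    ∃ u v : V, σ.get ⟨i, h⟩ = s(u, v) ∧ u ∈ explored r σ i ∧ v ∉ explored r σ i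

/-- The latency `L_v(σ)`: the sum of the lengths of the first `k` edges, where the `k`-th
edge is the first one containing `v` (and `L_r = 0`). -/
def latency {V : Type*} (r : V) (ℓ : Sym2 V → ℝ) (σ : List (Sym2 V)) (v : V) : ℝ :=
  if v = r then 0
  else ∑ i ∈ Finset.range (sInf {i | v ∈ σ.getD i s(r, r)} + 1), ℓ (σ.getD i s(r, r))

/-- `λ*(q)`: the minimum total edge length of a subtree of `G` containing the root `r`
whose vertices have total weight at least `q`. -/
def steinerCost {V : Type*} [Fintype V] (G : SimpleGraph V) (ℓ : Sym2 V → ℝ)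
    (w : V → ℕ) (r : V) (q : ℝ) : ℝ :=
  sInf {x | ∃ H : G.Subgraph, r ∈ H.verts ∧ H.coe.Connected ∧ H.coe.IsAcyclic ∧
    q ≤ ∑ v ∈ H.verts.toFinite.toFinset, (w v : ℝ) ∧
    x = ∑ e ∈ H.edgeSet.toFinite.toFinset, ℓ e}

/-!
After `i` steps an expanding search has explored a subtree rooted at `r` (every new edge
hangs a fresh vertex on the explored set, so no cycle can appear) of length
`L_i = ℓ_0 + ⋯ + ℓ_{i-1}` carrying weight `W_i`; hence `λ*(q) ≤ L_i` whenever `q ≤ W_i`.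
Splitting `[0, W]` at the `W_i` gives `∫ λ* ≤ ∑_i L_{i+1} (W_{i+1} - W_i)`, which by
summation by parts equals `∑_i ℓ_i (W - W_i)`. Since `W - W_i` is the weight still unexplored
when the `i`-th edge is traversed, this is `∑_v w_v L_v`.
Monotonicity and finiteness of `λ*` on `[0, W]` hold because it is an infimum over finitely
many subtrees, taken over a family that shrinks as `q` grows and that contains the whole
explored tree.
-/

open Finset SimpleGraph

lemma List.sum_map_take_eq_sum_range_getD {α M : Type*} [AddCommMonoid M] (f : α → M)
    (l : List α) (d : α) {i : ℕ} (hi : i ≤ l.length) :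
    ((l.take i).map f).sum = ∑ j ∈ Finset.range i, f (l.getD j d) := by
  induction i with
  | zero => simp
  | succ i ih =>
    rw [List.take_add_one, List.getElem?_eq_getElem (by omega), Finset.sum_range_succ,
      List.getD_eq_getElem _ _ (by omega), ← ih (by omega)]
    simp only [Option.toList_some, List.map_append, List.sum_append, List.map_cons, List.map_nil,
      List.sum_cons, List.sum_nil, add_zero]

lemma SimpleGraph.Subgraph.not_reachable_spanningCoe {V : Type*} {G : SimpleGraph V}
    {H : G.Subgraph} {u v : V} (huv : u ≠ v) (hv : v ∉ H.verts) :
    ¬H.spanningCoe.Reachable u v := by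
  rintro ⟨p⟩
  exact hv (H.edge_vert (Walk.adj_snd (p := p.reverse) (Walk.not_nil_of_ne huv.symm)))

lemma intervalIntegral_le_sum_mul_sub {f : ℝ → ℝ} {a c : ℕ → ℝ} {n : ℕ} (ha : Monotone a)
    (hf : IntervalIntegrable f MeasureTheory.volume (a 0) (a n))
    (hle : ∀ j < n, ∀ x ∈ Set.Icc (a j) (a (j + 1)), f x ≤ c j) :
    ∫ x in a 0..a n, f x ≤ ∑ j ∈ range n, c j * (a (j + 1) - a j) := by
  have hint : ∀ j < n, IntervalIntegrable f MeasureTheory.volume (a j) (a (j + 1)) :=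
    fun j hj => hf.mono_set <| Set.uIcc_subset_uIcc
      (Set.mem_uIcc_of_le (ha (Nat.zero_le _)) (ha hj.le))
      (Set.mem_uIcc_of_le (ha (Nat.zero_le _)) (ha hj))
  rw [← intervalIntegral.sum_integral_adjacent_intervals hint]
  refine sum_le_sum fun j hj => ?_
  replace hj := mem_range.1 hj
  calc ∫ x in a j..a (j + 1), f x ≤ ∫ _ in a j..a (j + 1), c j :=
        intervalIntegral.integral_mono_on (ha j.le_succ) (hint j hj) intervalIntegrable_const
          (hle j hj)
    _ = c j * (a (j + 1) - a j) := by
        rw [intervalIntegral.integral_const, smul_eq_mul, mul_comm]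

lemma sum_range_partialSum_mul_sub (f g : ℕ → ℝ) (n : ℕ) :
    ∑ j ∈ range n, (∑ t ∈ range (j + 1), f t) * (g (j + 1) - g j) =
      ∑ i ∈ range n, f i * (g n - g i) := by
  induction n with
  | zero => simp
  | succ n ih =>
    have hsplit : ∑ i ∈ range n, f i * (g (n + 1) - g i) =
        ∑ i ∈ range n, f i * (g n - g i) + (∑ i ∈ range n, f i) * (g (n + 1) - g n) := by
      rw [sum_mul, ← sum_add_distrib]
      exact sum_congr rfl fun i _ => by ring
    rw [sum_range_succ, ih, sum_range_succ f n,
      sum_range_succ (fun i => f i * (g (n + 1) - g i)), hsplit]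
    ring

section Explored

variable {V : Type*} {r : V} {σ : List (Sym2 V)}

lemma root_mem_explored (i : ℕ) : r ∈ explored r σ i :=
  Set.mem_insert r _

lemma mem_explored_of_mem_take {i : ℕ} {e : Sym2 V} (he : e ∈ σ.take i) {x : V} (hx : x ∈ e) :
    x ∈ explored r σ i :=
  Or.inr ⟨e, he, hx⟩

lemma explored_mono : Monotone (explored r σ) := by
  rintro i j hij x (rfl | ⟨e, he, hx⟩)
  · exact root_mem_explored j
  · exact mem_explored_of_mem_take (List.take_subset_take_left σ hij he) hx

lemma explored_succ {i : ℕ} (hi : i < σ.length) :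
    explored r σ (i + 1) = explored r σ i ∪ {x | x ∈ σ[i]} := by
  ext x
  simp only [explored, List.take_add_one, List.getElem?_eq_getElem hi, Option.toList_some,
    List.mem_append, List.mem_singleton, Set.mem_union, Set.mem_insert_iff, Set.mem_ofPred_eq]
  grind

lemma mem_explored_iff {v : V} {i : ℕ} :
    v ∈ explored r σ i ↔ v = r ∨ ∃ j < i, v ∈ σ.getD j s(r, r) := by
  refine ⟨?_, ?_⟩
  · rintro (rfl | ⟨e, he, hv⟩)
    · exact Or.inl rfl
    obtain ⟨j, hj, rfl⟩ := List.mem_take_iff_getElem.1 he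
    exact Or.inr ⟨j, by omega, by rwa [List.getD_eq_getElem _ _ (by omega)]⟩
  · rintro (rfl | ⟨j, hj, hv⟩)
    · exact root_mem_explored i
    by_cases hjn : j < σ.length
    · rw [List.getD_eq_getElem _ _ hjn] at hv
      exact mem_explored_of_mem_take (List.mem_take_iff_getElem.2 ⟨j, by omega, rfl⟩) hv
    · rw [List.getD_eq_default _ _ (by omega), Sym2.mem_iff, or_self] at hv
      exact hv ▸ root_mem_explored i

lemma latency_eq_sum_of_mem_explored (ℓ : Sym2 V → ℝ) {v : V}
    (hv : v ∈ explored r σ σ.length) :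
    latency r ℓ σ v = ∑ i ∈ range σ.length,
      if v ∈ explored r σ i then 0 else ℓ (σ.getD i s(r, r)) := by
  by_cases hvr : v = r
  · simp [latency, hvr, root_mem_explored]
  rw [latency, if_neg hvr]
  set S := {j | v ∈ σ.getD j s(r, r)}
  have hS : ∀ i, v ∈ explored r σ i ↔ ∃ j ∈ S, j < i := fun i => by
    simp only [mem_explored_iff, hvr, false_or, S, Set.mem_ofPred_eq]
    grind
  obtain ⟨j₀, hj₀, hj₀n⟩ := (hS _).1 hv
  have hkS : sInf S ∈ S := Nat.sInf_mem ⟨j₀, hj₀⟩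
  have hkn : sInf S < σ.length := (Nat.sInf_le hj₀).trans_lt hj₀n
  have hk : ∀ i, v ∈ explored r σ i ↔ sInf S < i := fun i =>
    (hS i).trans ⟨fun ⟨j, hj, hji⟩ => (Nat.sInf_le hj).trans_lt hji, fun h => ⟨_, hkS, h⟩⟩
  simp only [hk, sum_ite, sum_const_zero, zero_add]
  congr 1
  ext i
  simp only [mem_range, mem_filter]
  omega

end Explored

section SearchTree

variable {V : Type*} {G : SimpleGraph V} {r : V} {σ : List (Sym2 V)}

def searchTree (G : SimpleGraph V) (r : V) (σ : List (Sym2 V)) (i : ℕ) : G.Subgraph where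
  verts := explored r σ i
  Adj u v := G.Adj u v ∧ s(u, v) ∈ σ.take i
  adj_sub h := h.1
  edge_vert h := mem_explored_of_mem_take h.2 (Sym2.mem_mk_left _ _)
  symm := ⟨fun _ _ h => ⟨h.1.symm, Sym2.eq_swap ▸ h.2⟩⟩

lemma searchTree_zero : searchTree G r σ 0 = G.singletonSubgraph r := by
  ext <;> simp [searchTree, explored]

lemma searchTree_succ {i : ℕ} (hi : i < σ.length) {u v : V} (hσi : σ[i] = s(u, v))
    (huv : G.Adj u v) :
    searchTree G r σ (i + 1) = searchTree G r σ i ⊔ G.subgraphOfAdj huv := by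
  ext x y
  · simp only [searchTree, explored_succ hi, hσi, Sym2.mem_iff, Set.mem_union, Set.mem_ofPred_eq,
      Subgraph.verts_sup, subgraphOfAdj_verts, Set.union_insert, Set.union_singleton,
      Set.mem_insert_iff]
    tauto
  · simp only [searchTree, Subgraph.sup_adj, subgraphOfAdj_adj, List.take_add_one,
      List.getElem?_eq_getElem hi, hσi, Option.toList_some, List.mem_append,
      List.mem_singleton]
    grind [SimpleGraph.adj_symm, Sym2.eq_swap]

end SearchTree

def searchCost {V : Type*} (ℓ : Sym2 V → ℝ) (r : V) (σ : List (Sym2 V)) (i : ℕ) : ℝ :=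
  ∑ j ∈ range i, ℓ (σ.getD j s(r, r))

def exploredWeight {V : Type*} [Fintype V] (w : V → ℕ) (r : V) (σ : List (Sym2 V)) (i : ℕ) :
    ℝ :=
  ∑ v ∈ (explored r σ i).toFinite.toFinset, (w v : ℝ)

namespace IsExpandingSearch

variable {V : Type*} {G : SimpleGraph V} {r : V} {σ : List (Sym2 V)}

lemma exists_step (hσ : IsExpandingSearch G r σ) {i : ℕ} (hi : i < σ.length) :
    ∃ u v, σ[i] = s(u, v) ∧ G.Adj u v ∧ u ∈ explored r σ i ∧ v ∉ explored r σ i := by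
  obtain ⟨hG, u, v, he, hu, hv⟩ := hσ i hi
  simp only [List.get_eq_getElem] at hG he
  rw [he, SimpleGraph.mem_edgeSet] at hG
  exact ⟨u, v, he, hG, hu, hv⟩

lemma mem_edgeSet (hσ : IsExpandingSearch G r σ) {e : Sym2 V} (he : e ∈ σ) : e ∈ G.edgeSet := by
  obtain ⟨i, hi, rfl⟩ := List.mem_iff_getElem.1 he
  simpa using (hσ i hi).1

lemma getElem_notMem_take (hσ : IsExpandingSearch G r σ) {i : ℕ} (hi : i < σ.length) :
    σ[i] ∉ σ.take i := by
  obtain ⟨u, v, he, -, -, hv⟩ := hσ.exists_step hi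
  exact fun h => hv (mem_explored_of_mem_take h (he ▸ Sym2.mem_mk_right u v))

lemma nodup (hσ : IsExpandingSearch G r σ) : σ.Nodup := by
  refine List.nodup_iff_getElem?_ne_getElem?.2 fun i j hij hj => ?_
  rw [List.getElem?_eq_getElem (hij.trans hj), List.getElem?_eq_getElem hj, Ne, Option.some_inj]
  exact fun h => hσ.getElem_notMem_take hj (h ▸ List.mem_take_iff_getElem.2 ⟨i, by omega, rfl⟩)

lemma edgeSet_searchTree (hσ : IsExpandingSearch G r σ) (i : ℕ) :
    (searchTree G r σ i).edgeSet = {e | e ∈ σ.take i} := by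
  ext e
  induction e using Sym2.ind with
  | _ a b =>
    simp only [Subgraph.mem_edgeSet, searchTree, Set.mem_ofPred_eq]
    exact ⟨And.right, fun h => ⟨hσ.mem_edgeSet (List.mem_of_mem_take h), h⟩⟩

lemma sum_edgeSet_searchTree [Fintype V] (hσ : IsExpandingSearch G r σ) (ℓ : Sym2 V → ℝ) {i : ℕ}
    (hi : i ≤ σ.length) :
    ∑ e ∈ (searchTree G r σ i).edgeSet.toFinite.toFinset, ℓ e = searchCost ℓ r σ i := by
  have hfin : (searchTree G r σ i).edgeSet.toFinite.toFinset = (σ.take i).toFinset := by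
    ext e
    simp [hσ.edgeSet_searchTree]
  rw [hfin, List.sum_toFinset _ (hσ.nodup.sublist (List.take_sublist _ _)),
    List.sum_map_take_eq_sum_range_getD _ _ _ hi, searchCost]

lemma connected_searchTree (hσ : IsExpandingSearch G r σ) {i : ℕ} (hi : i ≤ σ.length) :
    (searchTree G r σ i).Connected := by
  induction i with
  | zero => exact searchTree_zero ▸ Subgraph.singletonSubgraph_connected
  | succ i ih =>
    obtain ⟨u, v, he, huv, hu, -⟩ := hσ.exists_step hi
    rw [searchTree_succ hi he huv]
    exact Subgraph.connected_sup (ih (by omega)).preconnected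
      (Subgraph.subgraphOfAdj_connected huv).preconnected ⟨u, hu, by simp⟩

lemma isAcyclic_spanningCoe_searchTree (hσ : IsExpandingSearch G r σ) {i : ℕ}
    (hi : i ≤ σ.length) : (searchTree G r σ i).spanningCoe.IsAcyclic := by
  induction i with
  | zero => exact isAcyclic_bot.anti fun a b h => by simp [searchTree] at h
  | succ i ih =>
    obtain ⟨u, v, he, huv, hu, hv⟩ := hσ.exists_step hi
    rw [searchTree_succ hi he huv, Subgraph.sup_spanningCoe, Subgraph.spanningCoe_subgraphOfAdj]
    exact (ih (by omega)).sup_edge_of_not_reachable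
      (Subgraph.not_reachable_spanningCoe (ne_of_mem_of_not_mem hu hv) hv)

lemma isTree_coe_searchTree (hσ : IsExpandingSearch G r σ) {i : ℕ} (hi : i ≤ σ.length) :
    (searchTree G r σ i).coe.IsTree :=
  ⟨(hσ.connected_searchTree hi).coe,
    (hσ.isAcyclic_spanningCoe_searchTree hi).embedding (Subgraph.coeEmbeddingSpanningCoe _)⟩

end IsExpandingSearch

section Weights

variable {V : Type*} [Fintype V] {r : V} {σ : List (Sym2 V)} {w : V → ℕ}

lemma exploredWeight_nonneg (i : ℕ) : 0 ≤ exploredWeight w r σ i :=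
  sum_nonneg fun _ _ => Nat.cast_nonneg _

lemma exploredWeight_mono : Monotone (exploredWeight w r σ) := fun _ _ h =>
  sum_le_sum_of_subset_of_nonneg (Set.Finite.toFinset_subset_toFinset.2 (explored_mono h))
    fun _ _ _ => Nat.cast_nonneg _

lemma exploredWeight_eq_sum_ite (i : ℕ) :
    exploredWeight w r σ i = ∑ v, if v ∈ explored r σ i then (w v : ℝ) else 0 := by
  rw [exploredWeight, ← sum_filter]
  congr 1
  ext v
  simp

lemma exploredWeight_length (hvisit : ∀ v, w v ≠ 0 → v ∈ explored r σ σ.length) :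
    exploredWeight w r σ σ.length = ∑ v, (w v : ℝ) := by
  rw [exploredWeight_eq_sum_ite]
  refine sum_congr rfl fun v _ => ?_
  by_cases hv : w v = 0 <;> simp [hv, hvisit]

lemma sum_mul_latency_eq (ℓ : Sym2 V → ℝ)
    (hvisit : ∀ v, w v ≠ 0 → v ∈ explored r σ σ.length) :
    ∑ v, (w v : ℝ) * latency r ℓ σ v = ∑ i ∈ range σ.length,
      ℓ (σ.getD i s(r, r)) * (exploredWeight w r σ σ.length - exploredWeight w r σ i) := by
  have hv : ∀ v, (w v : ℝ) * latency r ℓ σ v = ∑ i ∈ range σ.length,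
      ℓ (σ.getD i s(r, r)) * (if v ∈ explored r σ i then 0 else (w v : ℝ)) := fun v => by
    by_cases hw : w v = 0
    · simp [hw]
    rw [latency_eq_sum_of_mem_explored ℓ (hvisit v hw), mul_sum]
    exact sum_congr rfl fun i _ => by split_ifs <;> ring
  simp only [sum_congr rfl fun v _ => hv v, exploredWeight_length hvisit,
    exploredWeight_eq_sum_ite, ← sum_sub_distrib]
  rw [sum_comm]
  refine sum_congr rfl fun i _ => ?_
  rw [mul_sum]
  exact sum_congr rfl fun v _ => by split_ifs <;> ring

end Weights

section SteinerCost

variable {V : Type*} [Fintype V] {G : SimpleGraph V} {ℓ : Sym2 V → ℝ} {w : V → ℕ} {r : V}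

lemma steinerCost_nonneg (hℓ : ∀ e, 0 ≤ ℓ e) (q : ℝ) : 0 ≤ steinerCost G ℓ w r q :=
  Real.sInf_nonneg <| by
    rintro _ ⟨H, -, -, -, -, rfl⟩
    exact sum_nonneg fun e _ => hℓ e

lemma steinerCost_le (hℓ : ∀ e, 0 ≤ ℓ e) {H : G.Subgraph} (hr : r ∈ H.verts) (hH : H.coe.IsTree)
    {q : ℝ} (hq : q ≤ ∑ v ∈ H.verts.toFinite.toFinset, (w v : ℝ)) :
    steinerCost G ℓ w r q ≤ ∑ e ∈ H.edgeSet.toFinite.toFinset, ℓ e :=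
  csInf_le ⟨0, by rintro _ ⟨H, -, -, -, -, rfl⟩; exact sum_nonneg fun e _ => hℓ e⟩
    ⟨H, hr, hH.connected, hH.isAcyclic, hq, rfl⟩

lemma monotoneOn_steinerCost (hℓ : ∀ e, 0 ≤ ℓ e) {H₀ : G.Subgraph} (hr : r ∈ H₀.verts)
    (hH₀ : H₀.coe.IsTree) :
    MonotoneOn (steinerCost G ℓ w r) (Set.Iic (∑ v ∈ H₀.verts.toFinite.toFinset, (w v : ℝ))) := by
  intro a _ b hb hab
  refine le_csInf ⟨_, H₀, hr, hH₀.connected, hH₀.isAcyclic, hb, rfl⟩ ?_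
  rintro _ ⟨H, hrH, hc, ha, hq, rfl⟩
  exact steinerCost_le hℓ hrH ⟨hc, ha⟩ (hab.trans hq)

/-- The infimum is attained because `G` has only finitely many subgraphs. -/
lemma exists_sum_edgeSet_eq_steinerCost {H₀ : G.Subgraph} (hr : r ∈ H₀.verts)
    (hH₀ : H₀.coe.IsTree) {q : ℝ} (hq : q ≤ ∑ v ∈ H₀.verts.toFinite.toFinset, (w v : ℝ)) :
    ∃ H : G.Subgraph, ∑ e ∈ H.edgeSet.toFinite.toFinset, ℓ e = steinerCost G ℓ w r q := by
  obtain ⟨H, -, -, -, -, hH⟩ : steinerCost G ℓ w r q ∈ _ := Set.Nonempty.csInf_mem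
    ⟨_, H₀, hr, hH₀.connected, hH₀.isAcyclic, hq, rfl⟩
    ((Set.finite_range fun H : G.Subgraph => ∑ e ∈ H.edgeSet.toFinite.toFinset, ℓ e).subset
      (by rintro _ ⟨H, -, -, -, -, rfl⟩; exact ⟨H, rfl⟩))
  exact ⟨H, hH.symm⟩

lemma finite_image_steinerCost {H₀ : G.Subgraph} (hr : r ∈ H₀.verts) (hH₀ : H₀.coe.IsTree) :
    (steinerCost G ℓ w r '' Set.Iic (∑ v ∈ H₀.verts.toFinite.toFinset, (w v : ℝ))).Finite :=
  (Set.finite_range fun H : G.Subgraph => ∑ e ∈ H.edgeSet.toFinite.toFinset, ℓ e).subset <| by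
    rintro _ ⟨q, hq, rfl⟩
    exact exists_sum_edgeSet_eq_steinerCost hr hH₀ hq

end SteinerCost

lemma IsExpandingSearch.integral_steinerCost_le {V : Type*} [Fintype V] {G : SimpleGraph V}
    {r : V} {σ : List (Sym2 V)} (hσ : IsExpandingSearch G r σ) {ℓ : Sym2 V → ℝ}
    (hℓ : ∀ e, 0 ≤ ℓ e) (w : V → ℕ) :
    ∫ q in (0 : ℝ)..exploredWeight w r σ σ.length, steinerCost G ℓ w r q ≤
      ∑ i ∈ range σ.length,
        ℓ (σ.getD i s(r, r)) * (exploredWeight w r σ σ.length - exploredWeight w r σ i) := by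
  set W := exploredWeight w r σ
  have hle : ∀ i ≤ σ.length, ∀ q ≤ W i, steinerCost G ℓ w r q ≤ searchCost ℓ r σ i :=
    fun i hi q hq => hσ.sum_edgeSet_searchTree ℓ hi ▸
      steinerCost_le hℓ (root_mem_explored i) (hσ.isTree_coe_searchTree hi) hq
  have hWn0 : 0 ≤ W σ.length := exploredWeight_nonneg _
  have hint : IntervalIntegrable (steinerCost G ℓ w r) MeasureTheory.volume 0 (W σ.length) :=
    MonotoneOn.intervalIntegrable <|
      (monotoneOn_steinerCost hℓ (root_mem_explored _) (hσ.isTree_coe_searchTree le_rfl)).mono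
        fun q hq => (Set.uIcc_of_le hWn0 ▸ hq).2
  have hsub : ∀ {a b}, a ∈ Set.Icc 0 (W σ.length) → b ∈ Set.Icc 0 (W σ.length) →
      IntervalIntegrable (steinerCost G ℓ w r) MeasureTheory.volume a b := fun ha hb =>
    hint.mono_set (Set.uIcc_subset_uIcc (Set.Icc_subset_uIcc ha) (Set.Icc_subset_uIcc hb))
  have h0 : (0 : ℝ) ∈ Set.Icc 0 (W σ.length) := ⟨le_rfl, hWn0⟩
  have hW0 : W 0 ∈ Set.Icc 0 (W σ.length) :=
    ⟨exploredWeight_nonneg 0, exploredWeight_mono (Nat.zero_le _)⟩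
  have hWn : W σ.length ∈ Set.Icc 0 (W σ.length) := ⟨hWn0, le_rfl⟩
  -- Below `W 0` the single root is feasible, so `λ*` vanishes there.
  have hstart : ∫ q in (0 : ℝ)..W 0, steinerCost G ℓ w r q ≤ 0 := by
    simpa using intervalIntegral.integral_mono_on (g := fun _ => (0 : ℝ))
      (exploredWeight_nonneg 0) (hsub h0 hW0) intervalIntegrable_const
      fun q hq => (hle 0 (Nat.zero_le _) q hq.2).trans_eq (sum_range_zero _)
  calc ∫ q in (0 : ℝ)..W σ.length, steinerCost G ℓ w r q
      = (∫ q in (0 : ℝ)..W 0, steinerCost G ℓ w r q) +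
          ∫ q in W 0..W σ.length, steinerCost G ℓ w r q :=
        (intervalIntegral.integral_add_adjacent_intervals (hsub h0 hW0)
          (hsub hW0 hWn)).symm
    _ ≤ 0 + ∑ j ∈ range σ.length, searchCost ℓ r σ (j + 1) * (W (j + 1) - W j) :=
        add_le_add hstart <| intervalIntegral_le_sum_mul_sub exploredWeight_mono
          (hsub hW0 hWn) fun j hj q hq => hle (j + 1) hj q hq.2
    _ = ∑ i ∈ range σ.length, ℓ (σ.getD i s(r, r)) * (W σ.length - W i) := by
        rw [zero_add]
        exact sum_range_partialSum_mul_sub _ _ _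

theorem stmt_19_general {V : Type*} [Fintype V]
    (G : SimpleGraph V) (r : V)
    (ℓ : Sym2 V → ℝ) (hℓ : ∀ e, 0 ≤ ℓ e) (w : V → ℕ)
    (σ : List (Sym2 V)) (hσ : IsExpandingSearch G r σ)
    (hvisit : ∀ v : V, w v ≠ 0 → v ∈ explored r σ σ.length) :
    (∀ q ∈ Set.Icc (0:ℝ) (∑ v : V, (w v : ℝ)), 0 ≤ steinerCost G ℓ w r q) ∧
    MonotoneOn (steinerCost G ℓ w r) (Set.Icc (0:ℝ) (∑ v : V, (w v : ℝ))) ∧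
    (steinerCost G ℓ w r '' Set.Icc (0:ℝ) (∑ v : V, (w v : ℝ))).Finite ∧
    (∫ q in (0:ℝ)..(∑ v : V, (w v : ℝ)), steinerCost G ℓ w r q) ≤
      ∑ v : V, (w v : ℝ) * latency r ℓ σ v := by
  have hW := exploredWeight_length hvisit
  have hT := hσ.isTree_coe_searchTree le_rfl
  have hIcc : Set.Icc 0 (∑ v, (w v : ℝ)) ⊆
      Set.Iic (∑ v ∈ (searchTree G r σ σ.length).verts.toFinite.toFinset, (w v : ℝ)) :=
    fun q hq => show q ≤ exploredWeight w r σ σ.length from hW ▸ hq.2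
  refine ⟨fun q _ => steinerCost_nonneg hℓ q,
    (monotoneOn_steinerCost hℓ (root_mem_explored _) hT).mono hIcc,
    (finite_image_steinerCost (root_mem_explored _) hT).subset (Set.image_mono hIcc), ?_⟩
  rw [sum_mul_latency_eq ℓ hvisit, ← hW]
  exact hσ.integral_steinerCost_le hℓ w

theorem stmt_19 {V : Type*} [Fintype V] [DecidableEq V]
    (G : SimpleGraph V) (hG : G.Connected) (r : V)
    (ℓ : Sym2 V → ℝ) (hℓ : ∀ e, 0 ≤ ℓ e) (w : V → ℕ)
    (σ : List (Sym2 V)) (hσ : IsExpandingSearch G r σ)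
    (hvisit : ∀ v : V, w v ≠ 0 → v ∈ explored r σ σ.length) :
    (∀ q ∈ Set.Icc (0:ℝ) (∑ v : V, (w v : ℝ)), 0 ≤ steinerCost G ℓ w r q) ∧
    MonotoneOn (steinerCost G ℓ w r) (Set.Icc (0:ℝ) (∑ v : V, (w v : ℝ))) ∧
    (steinerCost G ℓ w r '' Set.Icc (0:ℝ) (∑ v : V, (w v : ℝ))).Finite ∧
    (∫ q in (0:ℝ)..(∑ v : V, (w v : ℝ)), steinerCost G ℓ w r q) ≤
      ∑ v : V, (w v : ℝ) * latency r ℓ σ v :=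
  stmt_19_general G r ℓ hℓ w σ hσ hvisit

end
end
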